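/- The system of moment equations N_A·(α·p̂1 + (1−α)·p̂1·p2) = x11A, N_A·p̂1·(1−p2)·(1−α) = x10A, N_A·p2·(1−p̂1)·(1−α) = x01A, with p̂1 = x11B/x·1B, has solution N_A = x1·A·x·1B/x11B, p2 = x01A·x11B/(x10A·x01B + x01A·x11B), and α = x·1A/x1·A − x01A·x·1B/(x01B·x1·A), where x1·A = x11A + x10A, x·1A = x11A + x01A, x·1B = x11B + x01B. -/
import Mathlib


theorem mme_model_I_solution (x11A x10A x01A x11B x01B : ℝ)
    (h11A : 0 < x11A) (h10A : 0 < x10A) (h01A : 0 < x01A)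
    (h11B : 0 < x11B) (h01B : 0 < x01B) :
    let x1A := x11A + x10A
    let xc1A := x11A + x01A
    let xc1B := x11B + x01B
    let p1 := x11B / xc1B
    let NA := x1A * xc1B / x11B
    let p2 := x01A * x11B / (x10A * x01B + x01A * x11B)
    let a := xc1A / x1A - x01A * xc1B / (x01B * x1A)
    NA * (a * p1 + (1 - a) * p1 * p2) = x11A ∧
    NA * p1 * (1 - p2) * (1 - a) = x10A ∧
    NA * p2 * (1 - p1) * (1 - a) = x01A := by
  intro x1A xc1A xc1B p1 NA p2 a
  have h1 : x1A ≠ 0 := by positivity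
  have h2 : xc1B ≠ 0 := by positivity
  have h3 : x11B ≠ 0 := h11B.ne'
  have h4 : x01B ≠ 0 := h01B.ne'
  have h5 : x10A * x01B + x01A * x11B ≠ 0 := by positivity
  refine ⟨?_, ?_, ?_⟩ <;>
  · simp only [p1, NA, p2, a, x1A, xc1A, xc1B]
    field_simp
    ring
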